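/- Let d ≥ 1, s ∈ (0, 1), and N > 0. For all ξ, η ∈ ℝ^d with ξ ≠ 0 and ‖η‖ ≤ ‖ξ‖/2, one has |m_{N,s}(ξ + η) − m_{N,s}(ξ)| ≤ 2(1 − s) ‖η‖ / ‖ξ‖. -/

import Mathlib

noncomputable section

open MeasureTheory Real Complex FourierTransform Filter Set ENNReal

/-- Euclidean space `ℝ^d`. -/
abbrev Rd (d : ℕ) : Type := EuclideanSpace ℝ (Fin d)

/-- The Fourier transform `𝓕f(ξ) = ∫ e^{-2πi x·ξ} f(x) dx`. -/
def FT {d : ℕ} (f : Rd d → ℂ) : Rd d → ℂ := FourierTransform.fourier f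

/-- The inverse Fourier transform. -/
def FTinv {d : ℕ} (f : Rd d → ℂ) : Rd d → ℂ := FourierTransformInv.fourierInv f

/-- Squared inhomogeneous Sobolev norm `‖f‖_{H^σ}² = ∫ (1+‖ξ‖²)^σ |g(ξ)|² dξ`, computed from
the frequency-side function `g = 𝓕f`. -/
def sobSq (d : ℕ) (σ : ℝ) (g : Rd d → ℂ) : ℝ≥0∞ :=
  ∫⁻ ξ : Rd d, ENNReal.ofReal ((1 + ‖ξ‖ ^ 2) ^ σ) * (‖g ξ‖₊ : ℝ≥0∞) ^ 2

/-- Squared homogeneous Sobolev norm `‖f‖_{Ḣ^σ}² = ∫ ‖ξ‖^{2σ} |g(ξ)|² dξ`, computed from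
the frequency-side function `g = 𝓕f`. -/
def dotSobSq (d : ℕ) (σ : ℝ) (g : Rd d → ℂ) : ℝ≥0∞ :=
  ∫⁻ ξ : Rd d, ENNReal.ofReal (‖ξ‖ ^ (2 * σ)) * (‖g ξ‖₊ : ℝ≥0∞) ^ 2

/-- The multiplier symbol `m_{N,s}` of the `I`-operator. -/
def mI (d : ℕ) (N s : ℝ) (ξ : Rd d) : ℝ := if ‖ξ‖ ≤ N then 1 else (N / ‖ξ‖) ^ (1 - s)

/-- The operator `I_N`, the Fourier multiplier with symbol `m_{N,s}`, realized as
`𝓕⁻(m_{N,s} · 𝓕 f)`. -/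
def IopN (d : ℕ) (N s : ℝ) (f : Rd d → ℂ) : Rd d → ℂ :=
  FTinv (fun ξ => (mI d N s ξ : ℂ) * FT f ξ)

/-- The symbol `e^{-4π² i t ‖ξ‖²}` of the free Schrödinger propagator `e^{itΔ}`. -/
def propag (d : ℕ) (t : ℝ) (ξ : Rd d) : ℂ :=
  Complex.exp (-((4 * Real.pi ^ 2 * t * ‖ξ‖ ^ 2 : ℝ) : ℂ) * Complex.I)

/-- The nonlinearity `|g|^{2k} g`. -/
def NLabs (k : ℕ) {d : ℕ} (g : Rd d → ℂ) (x : Rd d) : ℂ := (‖g x‖ : ℂ) ^ (2 * k) * g x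

/-- The energy `E_k(g) = (1/2)∫|∇g|² + (1/(2k+2))∫|g|^{2k+2}` (with `k = 1` this is the
cubic energy `E`). -/
def Energy (d k : ℕ) (g : Rd d → ℂ) : ℝ≥0∞ :=
  (1 / 2) * ∫⁻ x : Rd d, (‖fderiv ℝ g x‖₊ : ℝ≥0∞) ^ 2 +
    (1 / (2 * (k : ℝ≥0∞) + 2)) * ∫⁻ x : Rd d, (‖g x‖₊ : ℝ≥0∞) ^ (2 * k + 2)

/-- `g` is the (distributional) Fourier transform of `f`, expressed through the multiplication
formula `∫ f · 𝓕φ = ∫ g · φ` against all Schwartz functions `φ`. -/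
def IsFTPair (d : ℕ) (f g : Rd d → ℂ) : Prop :=
  ∀ φ : SchwartzMap (Rd d) ℂ, (∫ x : Rd d, f x * FT (⇑φ) x) = ∫ ξ : Rd d, g ξ * φ ξ

/-- `v : ℝ → (ℝ^d → ℂ)` is the frequency-side representation of a continuous `H²`-valued
Duhamel solution of `i∂_t u + Δ u = |u|^{2k} u` on `[a, b]`; the physical solution is
`u t = 𝓕⁻(v t)`. -/
def IsSolutionFreq (d k : ℕ) (a b : ℝ) (v : ℝ → Rd d → ℂ) : Prop :=
  (∀ t ∈ Set.Icc a b, AEStronglyMeasurable (v t) volume ∧ sobSq d 2 (v t) < ⊤) ∧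
  (∀ t₀ ∈ Set.Icc a b,
    Tendsto (fun t => sobSq d 2 (fun ξ => v t ξ - v t₀ ξ)) (nhdsWithin t₀ (Set.Icc a b)) (nhds 0)) ∧
  (∀ a' ∈ Set.Icc a b, ∀ t ∈ Set.Icc a b, ∀ᵐ ξ : Rd d ∂volume,
    v t ξ = propag d (t - a') ξ * v a' ξ -
      Complex.I * ∫ τ in a'..t, propag d (t - τ) ξ * FT (NLabs k (FTinv (v τ))) ξ)

/-! Writing `t = 1 - s`, the symbol is the radial profile `m_{N,s}(ξ) = (N / max N ‖ξ‖) ^ t`.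
Bernoulli's inequality `y ^ t ≤ 1 + t (y - 1)` for `y ≥ 1` makes this profile Lipschitz with
constant `t / min a b` between radii `a` and `b`; for `‖η‖ ≤ ‖ξ‖ / 2` the radii `‖ξ + η‖` and
`‖ξ‖` differ by at most `‖η‖` and are both at least `‖ξ‖ / 2`. -/

lemma one_sub_rpow_div_le {t u v : ℝ} (ht₀ : 0 ≤ t) (ht₁ : t ≤ 1) (hu : 0 < u) (huv : u ≤ v) :
    1 - (u / v) ^ t ≤ t * (v - u) / u := by
  have hv : 0 < v := hu.trans_le huv
  have hbernoulli : (v / u) ^ t ≤ 1 + t * (v / u - 1) := by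
    simpa using rpow_one_add_le_one_add_mul_self
      (show -1 ≤ v / u - 1 by linarith [div_nonneg hv.le hu.le]) ht₀ ht₁
  have hinv : (u / v) ^ t * (v / u) ^ t = 1 := by
    rw [← mul_rpow (by positivity) (by positivity), div_mul_div_cancel₀ hv.ne', div_self hu.ne',
      Real.one_rpow]
  have hle : (u / v) ^ t ≤ 1 := rpow_le_one (by positivity) ((div_le_one hv).2 huv) ht₀
  have hone : 1 ≤ (v / u) ^ t := one_le_rpow ((one_le_div hu).2 huv) ht₀
  calc 1 - (u / v) ^ t = (u / v) ^ t * ((v / u) ^ t - 1) := by rw [mul_sub, hinv, mul_one]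
    _ ≤ (v / u) ^ t - 1 := mul_le_of_le_one_left (by linarith) hle
    _ ≤ t * (v / u - 1) := by linarith
    _ = t * (v - u) / u := by field_simp

lemma rpow_div_max_antitone {N t a b : ℝ} (hN : 0 < N) (ht : 0 ≤ t) (hba : b ≤ a) :
    (N / max N a) ^ t ≤ (N / max N b) ^ t := by
  gcongr

lemma rpow_div_max_sub_le {N t a b : ℝ} (hN : 0 < N) (ht₀ : 0 ≤ t) (ht₁ : t ≤ 1) (hb : 0 < b)
    (hba : b ≤ a) : (N / max N b) ^ t - (N / max N a) ^ t ≤ t * (a - b) / b := by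
  have hvu := max_sub_max_le_max N a N b
  rw [sub_self, max_eq_right (sub_nonneg.2 hba)] at hvu
  set u := max N b
  set v := max N a
  have hu : 0 < u := lt_max_of_lt_left hN
  have huv : u ≤ v := max_le_max_left N hba
  have hbu : b ≤ u := le_max_right N b
  have hsplit : (N / v) ^ t = (N / u) ^ t * (u / v) ^ t := by
    rw [← mul_rpow (by positivity) (by positivity), div_mul_div_cancel₀ hu.ne']
  have hNu : (N / u) ^ t ≤ 1 :=
    rpow_le_one (by positivity) ((div_le_one hu).2 (le_max_left N b)) ht₀
  have huv' : (u / v) ^ t ≤ 1 :=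
    rpow_le_one (by positivity) ((div_le_one (hu.trans_le huv)).2 huv) ht₀
  calc (N / u) ^ t - (N / v) ^ t = (N / u) ^ t * (1 - (u / v) ^ t) := by rw [hsplit]; ring
    _ ≤ 1 - (u / v) ^ t := mul_le_of_le_one_left (by linarith) hNu
    _ ≤ t * (v - u) / u := one_sub_rpow_div_le ht₀ ht₁ hu huv
    _ ≤ t * (a - b) / b := by gcongr

lemma abs_rpow_div_max_sub_le {N t a b : ℝ} (hN : 0 < N) (ht₀ : 0 ≤ t) (ht₁ : t ≤ 1)
    (ha : 0 < a) (hb : 0 < b) :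
    |(N / max N a) ^ t - (N / max N b) ^ t| ≤ t * |a - b| / min a b := by
  rcases le_total b a with hba | hab
  · rw [abs_sub_comm, abs_of_nonneg (sub_nonneg.2 (rpow_div_max_antitone hN ht₀ hba)),
      abs_of_nonneg (sub_nonneg.2 hba), min_eq_right hba]
    exact rpow_div_max_sub_le hN ht₀ ht₁ hb hba
  · rw [abs_of_nonneg (sub_nonneg.2 (rpow_div_max_antitone hN ht₀ hab)),
      abs_sub_comm, abs_of_nonneg (sub_nonneg.2 hab), min_eq_left hab]
    exact rpow_div_max_sub_le hN ht₀ ht₁ ha hab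

lemma mI_eq_rpow {d : ℕ} {N : ℝ} (hN : 0 < N) (s : ℝ) (ξ : Rd d) :
    mI d N s ξ = (N / max N ‖ξ‖) ^ (1 - s) := by
  unfold mI
  split_ifs with h
  · rw [max_eq_left h, div_self hN.ne', Real.one_rpow]
  · rw [max_eq_right (not_le.1 h).le]

theorem stmt13_general (d : ℕ) (s N : ℝ) (hs : s ∈ Set.Ioo (0 : ℝ) 1) (hN : 0 < N)
    (ξ η : Rd d) (hξ : ξ ≠ 0) (hη : ‖η‖ ≤ ‖ξ‖ / 2) :
    |mI d N s (ξ + η) - mI d N s ξ| ≤ 2 * (1 - s) * ‖η‖ / ‖ξ‖ := by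
  obtain ⟨hs₀, hs₁⟩ := hs
  have hξpos : 0 < ‖ξ‖ := norm_pos_iff.2 hξ
  have hdist : |‖ξ + η‖ - ‖ξ‖| ≤ ‖η‖ := by
    simpa using abs_norm_sub_norm_le (ξ + η) ξ
  have hmin : ‖ξ‖ / 2 ≤ min ‖ξ + η‖ ‖ξ‖ := by
    refine le_min ?_ (by linarith)
    linarith [abs_le.1 hdist]
  rw [mI_eq_rpow hN, mI_eq_rpow hN]
  calc _ ≤ (1 - s) * |‖ξ + η‖ - ‖ξ‖| / min ‖ξ + η‖ ‖ξ‖ :=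
        abs_rpow_div_max_sub_le hN (by linarith) (by linarith)
          (by linarith [min_le_left ‖ξ + η‖ ‖ξ‖]) hξpos
    _ ≤ (1 - s) * ‖η‖ / (‖ξ‖ / 2) := by gcongr
    _ = 2 * (1 - s) * ‖η‖ / ‖ξ‖ := by field_simp

/-- the Lipschitz-type bound
`|m_{N,s}(ξ+η) - m_{N,s}(ξ)| ≤ 2(1-s)‖η‖/‖ξ‖` for `‖η‖ ≤ ‖ξ‖/2`. -/
theorem stmt13 (d : ℕ) (hd : 1 ≤ d) (s N : ℝ) (hs : s ∈ Set.Ioo (0 : ℝ) 1) (hN : 0 < N)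
    (ξ η : Rd d) (hξ : ξ ≠ 0) (hη : ‖η‖ ≤ ‖ξ‖ / 2) :
    |mI d N s (ξ + η) - mI d N s ξ| ≤ 2 * (1 - s) * ‖η‖ / ‖ξ‖ :=
  stmt13_general d s N hs hN ξ η hξ hη
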